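/- arXiv:1712.01958 — 7 statements merged into one kernel-verified Lean document; each statement's English description precedes it below -/
import Mathlib

section
/- Let T be a bounded distributive lattice and define the Jacobson radical of an ideal J by J_T(J) = {a ∈ T | ∀ x ∈ T, (a ⊔ x = 1 → ∃ z ∈ J, z ⊔ x = 1)}. Then for any two ideals a and b of T, J_T(a ∩ b) = J_T(a) ∩ J_T(b). -/
/-- An ideal of a bounded distributive lattice. -/
def IsLatticeIdeal {T : Type*} [DistribLattice T] [BoundedOrder T] (I : Set T) : Prop :=
  ⊥ ∈ I ∧ (∀ x y : T, x ∈ I → y ≤ x → y ∈ I) ∧ (∀ x y : T, x ∈ I → y ∈ I → x ⊔ y ∈ I)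

/-- The Jacobson radical of an ideal `J` of a bounded distributive lattice. -/
def latticeJacobson {T : Type*} [DistribLattice T] [BoundedOrder T] (J : Set T) : Set T :=
  {a : T | ∀ x : T, a ⊔ x = ⊤ → ∃ z ∈ J, z ⊔ x = ⊤}

/-- `J(a ∩ b) = J(a) ∩ J(b)` for ideals `a`, `b`. -/
theorem latticeJacobson_inter {T : Type*} [DistribLattice T] [BoundedOrder T]
    (a b : Set T) (ha : IsLatticeIdeal a) (hb : IsLatticeIdeal b) :
    latticeJacobson (a ∩ b) = latticeJacobson a ∩ latticeJacobson b := by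
  ext c
  constructor
  · intro hc
    exact ⟨fun x hx => (hc x hx).imp fun z ⟨hz, h⟩ => ⟨hz.1, h⟩,
           fun x hx => (hc x hx).imp fun z ⟨hz, h⟩ => ⟨hz.2, h⟩⟩
  · rintro ⟨hca, hcb⟩ x hx
    obtain ⟨z1, hz1a, hz1⟩ := hca x hx
    obtain ⟨z2, hz2b, hz2⟩ := hcb x hx
    refine ⟨z1 ⊓ z2, ⟨ha.2.1 z1 _ hz1a inf_le_left, hb.2.1 z2 _ hz2b inf_le_right⟩, ?_⟩
    rw [sup_inf_right, hz1, hz2, top_inf_eq]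
end

section
/- Let T be a bounded distributive lattice and for x ∈ T let K_T^x = {z | ∃ y, x ⊓ y = 0 ∧ z ≤ x ⊔ y} be the Krull boundary ideal of x. Then for all x, y ∈ T: K_T^x ∩ K_T^y = K_T^{x ⊔ y} ∩ K_T^{x ⊓ y}. -/
/-- The Krull boundary ideal of `x` in a bounded distributive lattice. -/
def krullBoundary {T : Type*} [DistribLattice T] [BoundedOrder T] (x : T) : Set T :=
  {z : T | ∃ y : T, x ⊓ y = ⊥ ∧ z ≤ x ⊔ y}

/-- `K_T^x ∩ K_T^y = K_T^{x ⊔ y} ∩ K_T^{x ⊓ y}`. -/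
theorem krullBoundary_inter {T : Type*} [DistribLattice T] [BoundedOrder T] (x y : T) :
    krullBoundary x ∩ krullBoundary y =
      krullBoundary (x ⊔ y) ∩ krullBoundary (x ⊓ y) := by
  ext z
  simp only [Set.mem_inter_iff, krullBoundary, Set.mem_setOf_eq]
  constructor
  · rintro ⟨⟨a, ha0, haz⟩, ⟨b, hb0, hbz⟩⟩
    have hzab : z ≤ (x ⊔ a) ⊓ (y ⊔ b) := le_inf haz hbz
    have key : (x ⊔ a) ⊓ (y ⊔ b) = (x ⊓ y ⊔ x ⊓ b) ⊔ (a ⊓ y ⊔ a ⊓ b) := by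
      rw [inf_sup_right, inf_sup_left x y b, inf_sup_left a y b]
    refine ⟨⟨a ⊓ b, ?_, ?_⟩, ⟨a ⊔ b, ?_, ?_⟩⟩
    · rw [inf_sup_right]
      have h1 : x ⊓ (a ⊓ b) = ⊥ := by
        rw [← inf_assoc, ha0, bot_inf_eq]
      have h2 : y ⊓ (a ⊓ b) = ⊥ := by
        rw [inf_comm a b, ← inf_assoc, hb0, bot_inf_eq]
      rw [h1, h2, bot_sup_eq]
    · refine hzab.trans ?_
      rw [key]
      refine sup_le (sup_le ?_ ?_) (sup_le ?_ ?_)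
      · exact le_sup_of_le_left (le_sup_of_le_left inf_le_left)
      · exact le_sup_of_le_left (le_sup_of_le_left inf_le_left)
      · exact le_sup_of_le_left (le_sup_of_le_right inf_le_right)
      · exact le_sup_right
    · rw [inf_sup_left]
      have h1 : x ⊓ y ⊓ a = ⊥ := by
        rw [inf_comm x y, inf_assoc, ha0, inf_bot_eq]
      have h2 : x ⊓ y ⊓ b = ⊥ := by
        rw [inf_assoc, hb0, inf_bot_eq]
      rw [h1, h2, bot_sup_eq]
    · refine hzab.trans ?_
      rw [key]
      refine sup_le (sup_le ?_ ?_) (sup_le ?_ ?_)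
      · exact le_sup_left
      · exact le_sup_of_le_right (le_sup_of_le_right inf_le_right)
      · exact le_sup_of_le_right (le_sup_of_le_left inf_le_left)
      · exact le_sup_of_le_right (le_sup_of_le_left inf_le_left)
  · rintro ⟨⟨a, ha0, haz⟩, ⟨b, hb0, hbz⟩⟩
    have hzab : z ≤ (x ⊔ y ⊔ a) ⊓ ((x ⊓ y) ⊔ b) := le_inf haz hbz
    have hxa : x ⊓ a = ⊥ := by
      refine le_antisymm ?_ bot_le
      calc x ⊓ a ≤ (x ⊔ y) ⊓ a := inf_le_inf_right a le_sup_left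
        _ = ⊥ := ha0
    have hya : y ⊓ a = ⊥ := by
      refine le_antisymm ?_ bot_le
      calc y ⊓ a ≤ (x ⊔ y) ⊓ a := inf_le_inf_right a le_sup_right
        _ = ⊥ := ha0
    constructor
    · refine ⟨a ⊔ (y ⊓ b), ?_, ?_⟩
      · rw [inf_sup_left, hxa, ← inf_assoc, hb0, bot_sup_eq]
      · refine hzab.trans ?_
        rw [inf_sup_left]
        refine sup_le ?_ ?_
        · exact le_sup_of_le_left (inf_le_right.trans inf_le_left)
        · rw [inf_sup_right, inf_sup_right]
          refine sup_le (sup_le ?_ ?_) ?_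
          · exact le_sup_of_le_left inf_le_left
          · exact le_sup_of_le_right le_sup_right
          · exact le_sup_of_le_right (le_sup_of_le_left inf_le_left)
    · refine ⟨a ⊔ (x ⊓ b), ?_, ?_⟩
      · have h2 : y ⊓ (x ⊓ b) = ⊥ := by rw [← inf_assoc, inf_comm y x, hb0]
        rw [inf_sup_left, hya, h2, bot_sup_eq]
      · refine hzab.trans ?_
        rw [inf_sup_left]
        refine sup_le ?_ ?_
        · exact le_sup_of_le_left (inf_le_right.trans inf_le_right)
        · rw [inf_sup_right, inf_sup_right]
          refine sup_le (sup_le ?_ ?_) ?_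
          · exact le_sup_of_le_right le_sup_right
          · exact le_sup_of_le_left inf_le_left
          · exact le_sup_of_le_right (le_sup_of_le_left inf_le_left)
end

section
/- Let T be a bounded distributive lattice, s₁, …, sₙ ∈ T with s₁ ⊓ ⋯ ⊓ sₙ = 0. Suppose y₁, …, yₙ ∈ T satisfy yᵢ ≥ sᵢ for all i and yᵢ ⊔ sⱼ = yⱼ ⊔ sᵢ for all i, j. Then y = y₁ ⊓ ⋯ ⊓ yₙ satisfies y ⊔ sⱼ = yⱼ for every j, and y is the unique element with this property. -/
/-- Patching for a covering by principal ideals in a bounded distributive lattice. -/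
theorem lattice_patching {T : Type*} [DistribLattice T] [BoundedOrder T] {n : ℕ}
    (s y : Fin n → T)
    (hcov : (Finset.univ.inf s) = ⊥)
    (hge : ∀ i, s i ≤ y i)
    (hcomp : ∀ i j, y i ⊔ s j = y j ⊔ s i) :
    (∀ j, (Finset.univ.inf y) ⊔ s j = y j) ∧
      (∀ z : T, (∀ j, z ⊔ s j = y j) → z = Finset.univ.inf y) := by
  constructor
  · intro j
    calc Finset.univ.inf y ⊔ s j
        = Finset.univ.inf (fun i => y i ⊔ s j) := Finset.inf_sup_distrib_right _ _ _
      _ = Finset.univ.inf (fun i => y j ⊔ s i) :=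
          Finset.inf_congr rfl (fun i _ => hcomp i j)
      _ = y j ⊔ Finset.univ.inf s := (Finset.inf_sup_distrib_left _ _ _).symm
      _ = y j := by rw [hcov, sup_bot_eq]
  · intro z hz
    calc z = z ⊔ Finset.univ.inf s := by rw [hcov, sup_bot_eq]
      _ = Finset.univ.inf (fun i => z ⊔ s i) := Finset.inf_sup_distrib_left _ _ _
      _ = Finset.univ.inf y := Finset.inf_congr rfl (fun i _ => hz i)
end

section
/- Let A be a commutative ring, a, w ∈ A, and Z an ideal of A. Suppose the image of w in the localization A[a⁻¹] lies in the Jacobson radical of A[a⁻¹], and a ∈ √(Z + (w)). Then a ∈ √Z. -/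
/-- If the image of `w` in `A[a⁻¹]` lies in the Jacobson radical of `A[a⁻¹]` and
`a ∈ √(Z + (w))`, then `a ∈ √Z`. -/
theorem mem_radical_of_jacobson_away {A : Type*} [CommRing A] (a w : A) (Z : Ideal A)
    (hw : algebraMap A (Localization.Away a) w ∈
      (⊥ : Ideal (Localization.Away a)).jacobson)
    (ha : a ∈ (Z + Ideal.span {w}).radical) :
    a ∈ Z.radical := by
  obtain ⟨n, hn⟩ := ha
  rw [Ideal.add_eq_sup, Submodule.mem_sup] at hn
  obtain ⟨z, hz, y, hy, hzy⟩ := hn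
  rw [Ideal.mem_span_singleton] at hy
  obtain ⟨t, rfl⟩ := hy
  set B := Localization.Away a
  set f := algebraMap A B with hf
  have hau : IsUnit (f a) :=
    IsLocalization.map_units B (⟨a, Submonoid.mem_powers a⟩ : Submonoid.powers a)
  set u := hau.unit with hu
  have hfa : f a = (u : B) := rfl
  have h1 : IsUnit (f w * (-(f t) * ((u⁻¹ : Bˣ) : B) ^ n) + 1) :=
    Ideal.mem_jacobson_bot.1 hw _
  have h2 : f w * (-(f t) * ((u⁻¹ : Bˣ) : B) ^ n) + 1 = f z * ((u⁻¹ : Bˣ) : B) ^ n := by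
    have hz' : f z = (f a) ^ n - f t * f w := by
      have := congrArg f hzy
      simp only [map_add, map_mul, map_pow] at this
      linear_combination this
    rw [hz', hfa]
    have huu : ((u : B)) ^ n * ((u⁻¹ : Bˣ) : B) ^ n = 1 := by
      rw [← mul_pow, Units.mul_inv, one_pow]
    linear_combination -huu
  rw [h2] at h1
  have hfz : IsUnit (f z) := isUnit_of_mul_isUnit_left h1
  have htop : Ideal.map f Z = ⊤ :=
    Ideal.eq_top_of_isUnit_mem _ (Ideal.mem_map_of_mem f hz) hfz
  have hone : (1 : B) ∈ Ideal.map f Z := htop ▸ Submodule.mem_top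
  rw [IsLocalization.mem_map_algebraMap_iff (Submonoid.powers a) B] at hone
  obtain ⟨⟨⟨z', hz'⟩, s⟩, hx⟩ := hone
  obtain ⟨m, hm⟩ := s.2
  rw [one_mul] at hx
  have heq : f s.1 = f z' := hx
  obtain ⟨c, hc⟩ := (IsLocalization.eq_iff_exists (Submonoid.powers a) B).1 heq
  obtain ⟨k, hk⟩ := c.2
  refine ⟨k + m, ?_⟩
  have hk' : a ^ k = (c : A) := hk
  have hm' : a ^ m = (s : A) := hm
  have : a ^ k * a ^ m = c.1 * z' := by
    rw [hk', hm']; exact hc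
  rw [pow_add, this]
  exact Z.mul_mem_left _ hz'
end

section
/- Let A be a commutative ring, a, u, v ∈ A, and Z an ideal of A. If the image of u·v in A[a⁻¹] lies in the Jacobson radical of A[a⁻¹] and a ∈ √(Z + (u, v)), then a ∈ √(Z + (u + v)). -/
/-- If the ideal `J` generates the unit ideal in `A[a⁻¹]`, then `a ∈ √J`. -/
lemma mem_radical_of_map_away_eq_top {A : Type*} [CommRing A] (a : A) (J : Ideal A)
    (h : J.map (algebraMap A (Localization.Away a)) = ⊤) : a ∈ J.radical := by
  have h1 : (1 : Localization.Away a) ∈ J.map (algebraMap A (Localization.Away a)) := by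
    rw [h]; trivial
  rw [IsLocalization.mem_map_algebraMap_iff (Submonoid.powers a)] at h1
  obtain ⟨⟨x, m⟩, hx⟩ := h1
  rw [one_mul] at hx
  obtain ⟨c, hc⟩ := (IsLocalization.eq_iff_exists (Submonoid.powers a)
    (Localization.Away a)).mp hx
  obtain ⟨k, hk⟩ := m.2
  obtain ⟨n, hn⟩ := c.2
  refine ⟨n + k, ?_⟩
  have : (c : A) * (m : A) = c * x.1 := hc
  rw [← hn, ← hk] at this
  rw [pow_add, this]
  exact J.mul_mem_left _ x.2

/-- If the image of `u·v` in `A[a⁻¹]` lies in the Jacobson radical of `A[a⁻¹]` and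
`a ∈ √(Z + (u, v))`, then `a ∈ √(Z + (u + v))`. -/
theorem mem_radical_add_sum {A : Type*} [CommRing A] (a u v : A) (Z : Ideal A)
    (huv : algebraMap A (Localization.Away a) (u * v) ∈
      (⊥ : Ideal (Localization.Away a)).jacobson)
    (ha : a ∈ (Z + Ideal.span {u, v}).radical) :
    a ∈ (Z + Ideal.span {u + v}).radical := by
  set J : Ideal A := Z + Ideal.span {u + v} with hJ
  -- Step 1: `a ∈ √(J + (u*v))`.
  have step1 : a ∈ (J + Ideal.span {u * v}).radical := by
    have hle : Z + Ideal.span {u, v} ≤ (J + Ideal.span {u * v}).radical := by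
      apply sup_le
      · exact le_trans (le_trans le_sup_left (le_sup_left : J ≤ _)) Ideal.le_radical
      · rw [Ideal.span_le]
        rintro x hx
        rcases hx with rfl | hx
        · -- x = u
          refine ⟨2, ?_⟩
          have : x ^ 2 = x * (x + v) - x * v := by ring
          rw [this]
          exact sub_mem
            (Ideal.mem_sup_left (Ideal.mem_sup_right
              (Ideal.mem_span_singleton.mpr ⟨x, mul_comm _ _⟩)))
            (Ideal.mem_sup_right (Ideal.mem_span_singleton.mpr dvd_rfl))
        · -- x = v
          rcases Set.mem_singleton_iff.mp hx with rfl
          refine ⟨2, ?_⟩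
          have : x ^ 2 = x * (u + x) - u * x := by ring
          rw [this]
          exact sub_mem
            (Ideal.mem_sup_left (Ideal.mem_sup_right
              (Ideal.mem_span_singleton.mpr ⟨x, mul_comm _ _⟩)))
            (Ideal.mem_sup_right (Ideal.mem_span_singleton.mpr dvd_rfl))
    exact (Ideal.radical_le_radical_iff.mpr hle) ha
  -- Step 2: extract `a^n = j + (u*v)*t` with `j ∈ J`.
  obtain ⟨n, hn⟩ := step1
  rw [Submodule.add_eq_sup, Submodule.mem_sup] at hn
  obtain ⟨j, hjJ, c, hc, hsum⟩ := hn
  obtain ⟨t, ht⟩ := Ideal.mem_span_singleton.mp hc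
  -- Step 3: the image of `j` in `A[a⁻¹]` is a unit.
  set f := algebraMap A (Localization.Away a) with hf
  have hfa : IsUnit (f a) := IsLocalization.Away.algebraMap_isUnit a
  obtain ⟨e, he⟩ := hfa
  have hinv : ((e⁻¹ : (Localization.Away a)ˣ) : Localization.Away a) ^ n * (f a) ^ n = 1 := by
    rw [← he, ← mul_pow, e.inv_mul, one_pow]
  have hunit : IsUnit (f j) := by
    have hj : f j = (f (u * v) * (-((((e⁻¹ : (Localization.Away a)ˣ) :
        Localization.Away a)) ^ n) * f t) + 1) * (f a) ^ n := by
      have hjexpr : j = a ^ n - u * v * t := by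
        rw [← hsum, ht]; ring
      rw [hjexpr, map_sub, map_pow, map_mul]
      linear_combination (f (u * v) * f t) * hinv
    rw [hj]
    exact (Ideal.mem_jacobson_bot.mp huv _).mul ((he ▸ e.isUnit).pow n)
  -- Step 4: hence `J` maps to the unit ideal, so `a ∈ √J`.
  apply mem_radical_of_map_away_eq_top
  exact Ideal.eq_top_of_isUnit_mem _ (Ideal.mem_map_of_mem f hjJ) hunit
end

section
/- Call two sequences (b₁,…,bₙ) and (x₁,…,xₙ) in a commutative ring A complementary if √(b₁·x₁) = √0, √(bᵢ₊₁·xᵢ₊₁) ⊆ √(bᵢ, xᵢ) for 1 ≤ i < n, and √(bₙ, xₙ) = (1) (where √(c,d) denotes the radical of the ideal generated by c and d). If (b₁,…,bₙ) and (x₁,…,xₙ) are complementary, then for every a ∈ A: √(a, b₁, …, bₙ) = √(b₁ + a·x₁, …, bₙ + a·xₙ); in particular a ∈ √(b₁ + a·x₁, …, bₙ + a·xₙ). -/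
/-- Two sequences `b`, `x` of length `n` in a commutative ring are *complementary* if
`b₀·x₀` is nilpotent, `bᵢ₊₁·xᵢ₊₁ ∈ √(bᵢ, xᵢ)` for each `i`, and `√(bₙ₋₁, xₙ₋₁) = (1)`. -/
def Complementary {A : Type*} [CommRing A] {n : ℕ} (b x : Fin n → A) : Prop :=
  (∀ h : 0 < n, IsNilpotent (b ⟨0, h⟩ * x ⟨0, h⟩)) ∧
  (∀ (i : ℕ) (h : i + 1 < n),
      b ⟨i + 1, h⟩ * x ⟨i + 1, h⟩ ∈
        (Ideal.span {b ⟨i, Nat.lt_of_succ_lt h⟩, x ⟨i, Nat.lt_of_succ_lt h⟩}).radical) ∧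
  (∀ h : 0 < n,
      (Ideal.span {b ⟨n - 1, Nat.sub_lt h Nat.one_pos⟩,
        x ⟨n - 1, Nat.sub_lt h Nat.one_pos⟩}).radical = ⊤)

/-- If `y ∈ √(u, v)` then `a·y ∈ √(a·u, a·v)`. -/
lemma mul_mem_radical_span_pair {A : Type*} [CommRing A] (a u v y : A)
    (hy : y ∈ (Ideal.span ({u, v} : Set A)).radical) :
    a * y ∈ (Ideal.span ({a * u, a * v} : Set A)).radical := by
  obtain ⟨k, hk⟩ := hy
  have hk' : y ^ (k + 1) ∈ Ideal.span ({u, v} : Set A) := by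
    rw [pow_succ']
    exact Ideal.mul_mem_left _ _ hk
  rw [Ideal.mem_span_pair] at hk'
  obtain ⟨p, q, hpq⟩ := hk'
  refine ⟨k + 1, Ideal.mem_span_pair.2 ⟨a ^ k * p, a ^ k * q, ?_⟩⟩
  rw [mul_pow, ← hpq]
  ring

/-- If `(b₁,…,bₙ)` and `(x₁,…,xₙ)` are complementary then for every `a`,
`√(a, b₁, …, bₙ) = √(b₁ + a·x₁, …, bₙ + a·xₙ)`; in particular
`a ∈ √(b₁ + a·x₁, …, bₙ + a·xₙ)`. -/
theorem complementary_radical_eq {A : Type*} [CommRing A] {n : ℕ} (hn : 0 < n)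
    (b x : Fin n → A) (h : Complementary b x) (a : A) :
    (Ideal.span (insert a (Set.range b))).radical =
        (Ideal.span (Set.range fun i => b i + a * x i)).radical ∧
      a ∈ (Ideal.span (Set.range fun i => b i + a * x i)).radical := by
  obtain ⟨h1, h2, h3⟩ := h
  set J : Ideal A := Ideal.span (Set.range fun i => b i + a * x i) with hJ
  set R : Ideal A := J.radical with hR
  have hJR : J ≤ R := Ideal.le_radical
  have hRrad : R.radical = R := Ideal.radical_idem J
  have hcJ : ∀ i : Fin n, b i + a * x i ∈ J := fun i =>
    Ideal.subset_span (Set.mem_range_self i)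
  -- auxiliary: if u, v ∈ R and y ∈ √(u,v) then a·y ∈ R
  have aux : ∀ u v y : A, a * u ∈ R → a * v ∈ R →
      y ∈ (Ideal.span ({u, v} : Set A)).radical → a * y ∈ R := by
    intro u v y hu hv hy
    have hm : a * y ∈ (Ideal.span ({a * u, a * v} : Set A)).radical :=
      mul_mem_radical_span_pair a u v y hy
    have hle : Ideal.span ({a * u, a * v} : Set A) ≤ R := by
      rw [Ideal.span_le]
      rintro z (rfl | rfl)
      · exact hu
      · exact hv
    have hle2 : (Ideal.span ({a * u, a * v} : Set A)).radical ≤ R := by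
      rw [← hRrad]; exact Ideal.radical_mono hle
    exact hle2 hm
  -- key induction: a·xᵢ ∈ R and a·bᵢ ∈ R
  have key : ∀ (i : ℕ) (hi : i < n), a * x ⟨i, hi⟩ ∈ R ∧ a * b ⟨i, hi⟩ ∈ R := by
    intro i
    induction i with
    | zero =>
      intro hi
      obtain ⟨m, hm⟩ := h1 hi
      have hnil : b ⟨0, hi⟩ * x ⟨0, hi⟩ ∈ R := ⟨m, by rw [hm]; exact J.zero_mem⟩
      have hc : b ⟨0, hi⟩ + a * x ⟨0, hi⟩ ∈ R := hJR (hcJ _)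
      have hsq : (a * x ⟨0, hi⟩) ^ 2 =
          a * x ⟨0, hi⟩ * (b ⟨0, hi⟩ + a * x ⟨0, hi⟩) - a * (b ⟨0, hi⟩ * x ⟨0, hi⟩) := by
        ring
      have hx : a * x ⟨0, hi⟩ ∈ R := by
        have : (a * x ⟨0, hi⟩) ^ 2 ∈ R := by
          rw [hsq]
          exact R.sub_mem (Ideal.mul_mem_left _ _ hc) (Ideal.mul_mem_left _ _ hnil)
        rw [← hRrad] at this ⊢
        exact Ideal.mem_radical_of_pow_mem this
      refine ⟨hx, ?_⟩
      have hb : a * b ⟨0, hi⟩ =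
          a * (b ⟨0, hi⟩ + a * x ⟨0, hi⟩) - a * (a * x ⟨0, hi⟩) := by ring
      rw [hb]
      exact R.sub_mem (Ideal.mul_mem_left _ _ hc) (Ideal.mul_mem_left _ _ hx)
    | succ i ih =>
      intro hi
      obtain ⟨hx, hb⟩ := ih (Nat.lt_of_succ_lt hi)
      have hbx : a * (b ⟨i + 1, hi⟩ * x ⟨i + 1, hi⟩) ∈ R :=
        aux _ _ _ hb hx (h2 i hi)
      have hc : b ⟨i + 1, hi⟩ + a * x ⟨i + 1, hi⟩ ∈ R := hJR (hcJ _)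
      have hx' : a * x ⟨i + 1, hi⟩ ∈ R := by
        have hsq : (a * x ⟨i + 1, hi⟩) ^ 2 =
            a * x ⟨i + 1, hi⟩ * (b ⟨i + 1, hi⟩ + a * x ⟨i + 1, hi⟩) -
              a * (b ⟨i + 1, hi⟩ * x ⟨i + 1, hi⟩) := by ring
        have : (a * x ⟨i + 1, hi⟩) ^ 2 ∈ R := by
          rw [hsq]
          exact R.sub_mem (Ideal.mul_mem_left _ _ hc) hbx
        rw [← hRrad] at this ⊢
        exact Ideal.mem_radical_of_pow_mem this
      refine ⟨hx', ?_⟩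
      have hb' : a * b ⟨i + 1, hi⟩ =
          a * (b ⟨i + 1, hi⟩ + a * x ⟨i + 1, hi⟩) - a * (a * x ⟨i + 1, hi⟩) := by ring
      rw [hb']
      exact R.sub_mem (Ideal.mul_mem_left _ _ hc) (Ideal.mul_mem_left _ _ hx')
  -- a ∈ R
  have haR : a ∈ R := by
    obtain ⟨hxlast, hblast⟩ := key (n - 1) (Nat.sub_lt hn Nat.one_pos)
    have h1mem : (1 : A) ∈ (Ideal.span
        ({b ⟨n - 1, Nat.sub_lt hn Nat.one_pos⟩,
          x ⟨n - 1, Nat.sub_lt hn Nat.one_pos⟩} : Set A)).radical := by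
      rw [h3 hn]; trivial
    have := aux _ _ _ hblast hxlast h1mem
    rwa [mul_one] at this
  have hbR : ∀ i : Fin n, b i ∈ R := by
    intro i
    have hxR : a * x i ∈ R := (key i.1 i.2).1
    have : b i = (b i + a * x i) - a * x i := by ring
    rw [this]
    exact R.sub_mem (hJR (hcJ i)) hxR
  constructor
  · apply le_antisymm
    · rw [← hRrad]
      apply Ideal.radical_mono
      rw [Ideal.span_le]
      rintro z (rfl | ⟨i, rfl⟩)
      · exact haR
      · exact hbR i
    · apply Ideal.radical_mono
      rw [Ideal.span_le]
      rintro z ⟨i, rfl⟩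
      have haI : a ∈ Ideal.span (insert a (Set.range b)) :=
        Ideal.subset_span (Set.mem_insert _ _)
      have hbI : b i ∈ Ideal.span (insert a (Set.range b)) :=
        Ideal.subset_span (Set.mem_insert_of_mem _ (Set.mem_range_self i))
      exact Ideal.add_mem _ hbI (Ideal.mul_mem_right _ _ haI)
  · exact haR
end

section
/- Let A be a commutative ring and ℓ ≥ 0. If for all x₀, …, x_ℓ ∈ A there exist a₀, …, a_ℓ ∈ A and m₀, …, m_ℓ ∈ ℕ such that x₀^{m₀}·(x₁^{m₁}·(⋯(x_ℓ^{m_ℓ}·(1 + a_ℓ·x_ℓ) + ⋯ + a₁·x₁)⋯) + a₀·x₀) = 0, then the Krull dimension of A is at most ℓ. (Equivalently, the existence of such algebraic identities for all sequences of length ℓ+1 characterizes Krull dimension ≤ ℓ.) -/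
/-!
Given a chain of primes `𝔭₀ ⊊ ⋯ ⊊ 𝔭_{ℓ+1}`, pick `xᵢ ∈ 𝔭ᵢ₊₁ \ 𝔭ᵢ` and peel off the
boundary expression one layer at a time: if `xᵢ^{mᵢ}·(r + aᵢ·xᵢ) ∈ 𝔭ᵢ`, then
`r + aᵢ·xᵢ ∈ 𝔭ᵢ` because `𝔭ᵢ` is prime and `xᵢ ∉ 𝔭ᵢ`, hence `r ∈ 𝔭ᵢ₊₁` because
`xᵢ ∈ 𝔭ᵢ₊₁ ⊇ 𝔭ᵢ`. If the expression vanished, the innermost `1` would end up in `𝔭_{ℓ+1}`.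
-/

/-- The iterated "Krull boundary" expression
`x₀^{m₀}·(x₁^{m₁}·(⋯(x_ℓ^{m_ℓ}·(1 + a_ℓ·x_ℓ) + ⋯ + a₁·x₁)⋯) + a₀·x₀)`. -/
def krullExpr {A : Type*} [CommRing A] : List (A × A × ℕ) → A
  | [] => 1
  | (x, a, m) :: rest => x ^ m * (krullExpr rest + a * x)

section

variable {A : Type*} [CommRing A]

theorem Ideal.mem_of_pow_mul_add_mul_mem {p q : Ideal A} [hp : p.IsPrime] (hpq : p ≤ q)
    {x : A} (hxq : x ∈ q) (hxp : x ∉ p) {r : A} (a : A) (m : ℕ)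
    (h : x ^ m * (r + a * x) ∈ p) : r ∈ q := by
  have hsum : r + a * x ∈ p :=
    (hp.mem_or_mem h).resolve_left fun hxm => hxp (hp.mem_of_pow_mem m hxm)
  exact (q.add_mem_iff_left (q.mul_mem_left a hxq)).mp (hpq hsum)

theorem krullExpr_notMem_of_monotone (P : ℕ → PrimeSpectrum A) (hP : Monotone P) :
    ∀ L : List (A × A × ℕ),
      (∀ i (hi : i < L.length), L[i].1 ∈ (P (i + 1)).asIdeal ∧ L[i].1 ∉ (P i).asIdeal) →
      krullExpr L ∉ (P 0).asIdeal
  | [], _ => (P 0).isPrime.one_notMem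
  | (x, a, m) :: rest, hL => fun hmem => by
    have hrest : krullExpr rest ∉ (P 1).asIdeal :=
      krullExpr_notMem_of_monotone (fun n => P (n + 1)) (fun _ _ h => hP (by omega)) rest
        fun i hi => hL (i + 1) (by simpa using hi)
    obtain ⟨hx1, hx0⟩ := hL 0 (by simp)
    exact hrest <| Ideal.mem_of_pow_mul_add_mul_mem (hP zero_le_one) hx1 hx0 a m hmem

end

/-- The algebraic-identity characterization implies the Krull dimension bound:
if for all `x₀, …, x_ℓ` there are `a₀, …, a_ℓ` and exponents `m₀, …, m_ℓ` with
`x₀^{m₀}·(x₁^{m₁}·(⋯(x_ℓ^{m_ℓ}·(1 + a_ℓ·x_ℓ) + ⋯ + a₁·x₁)⋯) + a₀·x₀) = 0`,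
then `ringKrullDim A ≤ ℓ`. -/
theorem krullDim_le_of_identities {A : Type*} [CommRing A] (ℓ : ℕ)
    (h : ∀ x : Fin (ℓ + 1) → A, ∃ a : Fin (ℓ + 1) → A, ∃ m : Fin (ℓ + 1) → ℕ,
      krullExpr ((List.finRange (ℓ + 1)).map fun i => (x i, a i, m i)) = 0) :
    ringKrullDim A ≤ ℓ := by
  rw [ringKrullDim, ← ENat.WithBot.lt_add_one_iff, ← Nat.cast_one, ← Nat.cast_add,
    Order.krullDim_lt_coe_iff]
  intro p
  by_contra! hp
  -- `p` continued by its last prime, so that the chain can be shifted along the list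
  let P : ℕ → PrimeSpectrum A := fun n => p (Fin.clamp n p.length)
  have hgap (i : Fin (ℓ + 1)) : ∃ y ∈ (P (i + 1)).asIdeal, y ∉ (P i).asIdeal :=
    SetLike.exists_of_lt <| p.strictMono <| Fin.mk_lt_mk.mpr <| by omega
  choose x hx using hgap
  obtain ⟨a, m, hzero⟩ := h x
  refine krullExpr_notMem_of_monotone P (p.monotone.comp Fin.clamp_monotone) _ ?_
    (hzero ▸ zero_mem _)
  intro i hi
  simpa using hx ⟨i, by simpa using hi⟩
end
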